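/- Let f : X → (-∞,+∞] be a c-antiderivative of a multivalued mapping M : X ⇉ Y and let S be a nonempty subset of dom(M). Then the minimal element of 𝒜_{[c,f|_S,M]} (i.e., the minimal c-convex c-antiderivative of M equal to f on S) is given, for all x ∈ X, by α_{[c,f|_S,M]}(x) = sup_{s ∈ S} [ f(s) + R_{[c,M,s]}(x) ]; in particular this function belongs to 𝒜_{[c,f|_S,M]} and is ≤ every member of 𝒜_{[c,f|_S,M]}. -/

import Mathlib

noncomputable section

open scoped Classical

variable {X Y : Type*}

/-- The `c`-transform of `f : X → EReal`, a function on `Y`: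
`f^c(y) = sup_{x ∈ X} (c(x,y) - f(x))`. The `c`-transform of a function on `Y` is obtained
by applying this to the swapped coupling `fun y x => c x y`. -/
def cTransform (c : X → Y → ℝ) (f : X → EReal) : Y → EReal :=
  fun y => ⨆ x, ((c x y : EReal) - f x)

/-- `f` is proper: it takes no value `-∞` (i.e. maps into `(-∞, +∞]`) and is finite somewhere. -/
def ProperFn (f : X → EReal) : Prop :=
  (∀ x, f x ≠ ⊥) ∧ ∃ x, f x ≠ ⊤

/-- `f` is `c`-convex: it is proper and is the `c`-transform of some proper
`g : Y → (-∞, +∞]`. -/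
def IsCConvex (c : X → Y → ℝ) (f : X → EReal) : Prop :=
  ProperFn f ∧ ∃ g : Y → EReal, ProperFn g ∧ f = cTransform (fun y x => c x y) g

/-- The `c`-subdifferential of `f`:
`∂_c f(x) = { y | ∀ x', f(x) + c(x',y) ≤ f(x') + c(x,y) }`. -/
def cSubdiff (c : X → Y → ℝ) (f : X → EReal) (x : X) : Set Y :=
  { y | ∀ x', f x + (c x' y : EReal) ≤ f x' + (c x y : EReal) }

/-- The domain of a multivalued mapping `M : X ⇉ Y`. -/
def mapDom (M : X → Set Y) : Set X := { x | (M x).Nonempty }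

/-- The inverse multivalued mapping `M⁻¹ : Y ⇉ X`. -/
def mapInv (M : X → Set Y) : Y → Set X := fun y => { x | y ∈ M x }

/-- The image `M(S) = ⋃_{s ∈ S} M(s)` of a set `S` under a multivalued mapping. -/
def mapImageOn (M : X → Set Y) (S : Set X) : Set Y := { y | ∃ s ∈ S, y ∈ M s }

/-- The image `Im(M) = ⋃_{x ∈ X} M(x)` of a multivalued mapping. -/
def mapIm (M : X → Set Y) : Set Y := { y | ∃ x, y ∈ M x }

/-- `f` is a `c`-antiderivative of `M`: `f` is proper and `G(M) ⊆ G(∂_c f)`. -/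
def IsCAntiderivative (c : X → Y → ℝ) (f : X → EReal) (M : X → Set Y) : Prop :=
  ProperFn f ∧ ∀ x y, y ∈ M x → y ∈ cSubdiff c f x

/-- The family `𝒜_{[c, f|_S, M]}` of all `c`-convex `c`-antiderivatives of `M`
which coincide with `f` on `S`. -/
def cFamily (c : X → Y → ℝ) (f : X → EReal) (S : Set X) (M : X → Set Y) :
    Set (X → EReal) :=
  { h | IsCConvex c h ∧ (∀ x y, y ∈ M x → y ∈ cSubdiff c h x) ∧ ∀ s ∈ S, h s = f s }

/-- The upper envelope `γ_{[c, f|_S, M]}`. -/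
def upperEnv (c : X → Y → ℝ) (f : X → EReal) (S : Set X) (M : X → Set Y) : X → EReal :=
  fun x => ⨆ h ∈ cFamily c f S M, h x

/-- The lower envelope `α_{[c, f|_S, M]}`. -/
def lowerEnv (c : X → Y → ℝ) (f : X → EReal) (S : Set X) (M : X → Set Y) : X → EReal :=
  fun x => ⨅ h ∈ cFamily c f S M, h x

/-- The indicator function `ι_A` (0 on `A`, `+∞` off `A`). -/
def indicatorE (A : Set X) : X → EReal := fun x => if x ∈ A then 0 else ⊤

/-- Rockafellar's function `R_{[c,M,s]}`: the supremum over `n ≥ 1` and chains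
`x_1 = s`, `x_{n+1} = x`, `{(x_i, y_i)}_{i=1}^n ⊆ G(M)` of
`Σ_{i=1}^n [c(x_{i+1}, y_i) - c(x_i, y_i)]` (0-indexed below). -/
def rockafellar (c : X → Y → ℝ) (M : X → Set Y) (s : X) : X → EReal := fun x =>
  ⨆ (n : ℕ) (_ : 0 < n) (xs : ℕ → X) (ys : ℕ → Y)
      (_ : xs 0 = s ∧ ∀ i < n, ys i ∈ M (xs i)),
    (((∑ i ∈ Finset.range n,
        (c (if i + 1 < n then xs (i + 1) else x) (ys i) - c (xs i) (ys i))) : ℝ) : EReal)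

/-- `M` is cyclically monotone of order `n` with respect to `c`: for any `n` pairs
`{(x_i, y_i)}_{i=1}^n ⊆ G(M)`, setting `x_{n+1} = x_1`,
`0 ≤ Σ_{i=1}^n [c(x_i,y_i) - c(x_{i+1},y_i)]` (0-indexed below, cyclically). -/
def IsNCMonotone (c : X → Y → ℝ) (M : X → Set Y) (n : ℕ) : Prop :=
  ∀ (xs : ℕ → X) (ys : ℕ → Y), (∀ i < n, ys i ∈ M (xs i)) →
    0 ≤ ∑ i ∈ Finset.range n, (c (xs i) (ys i) - c (xs ((i + 1) % n)) (ys i))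

/-- `M` is `c`-cyclically monotone: `n`-`c`-monotone for all `n`. -/
def IsCCyclicallyMonotone (c : X → Y → ℝ) (M : X → Set Y) : Prop :=
  ∀ n : ℕ, IsNCMonotone c M n

/-!
Along any chain `(xᵢ, yᵢ)` in the graph of `M` starting at `s`, every `c`-antiderivative `h`
of `M` grows at least by the chain sum, so `h s + R_{[c,M,s]} ≤ h`; with `h = f` on `S` this makes
`φ = sup_{s ∈ S} (f s + R_{[c,M,s]})` a lower bound of the family. Conversely `φ` belongs to the
family: appending a pair `(x, y)` to a chain ending at `x` shows that `G(M) ⊆ G(∂_c φ)`, and each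
chain value is the `c`-affine function `c(·, y_last) - b` lying below `φ`, so `φ ≤ φ^{cc}`,
which forces `φ` to be `c`-convex.
-/

lemma EReal.iSup_add_coe_le {ι : Sort*} {u : ι → EReal} {a : ℝ} {b : EReal}
    (h : ∀ i, u i + a ≤ b) : (⨆ i, u i) + a ≤ b := by
  rw [← EReal.le_sub_iff_add_le (.inl (EReal.coe_ne_bot a)) (.inl (EReal.coe_ne_top a))]
  exact iSup_le fun i =>
    (EReal.le_sub_iff_add_le (.inl (EReal.coe_ne_bot a)) (.inl (EReal.coe_ne_top a))).2 (h i)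

lemma EReal.coe_sub_coe_sub_le (p : ℝ) (a : EReal) : (p : EReal) - (p - a) ≤ a := by
  induction a with
  | bot => simp
  | coe q => exact_mod_cast (sub_sub_cancel p q).le
  | top => exact le_top

section CTransform

variable {c : X → Y → ℝ} {h : X → EReal}

lemma cTransform_cTransform_le (x : X) :
    cTransform (fun y x => c x y) (cTransform c h) x ≤ h x :=
  iSup_le fun y => calc
    (c x y : EReal) - cTransform c h y ≤ (c x y : EReal) - ((c x y : EReal) - h x) :=
      EReal.sub_le_sub le_rfl (le_iSup (fun x' => (c x' y : EReal) - h x') x)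
    _ ≤ h x := EReal.coe_sub_coe_sub_le _ _

lemma le_cTransform_cTransform {y : Y} {b : ℝ} (hmin : ∀ x', ((c x' y - b : ℝ) : EReal) ≤ h x')
    (x : X) : ((c x y - b : ℝ) : EReal) ≤ cTransform (fun y x => c x y) (cTransform c h) x := by
  have hb : cTransform c h y ≤ b := iSup_le fun x' => EReal.sub_le_of_le_add' <|
    (EReal.sub_le_iff_le_add (.inl (EReal.coe_ne_bot b)) (.inl (EReal.coe_ne_top b))).1 (hmin x')
  exact le_iSup_of_le y (by rw [EReal.coe_sub]; exact EReal.sub_le_sub le_rfl hb)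

lemma isCConvex_of_le_cTransform_cTransform (hh : ProperFn h)
    (hle : ∀ x, h x ≤ cTransform (fun y x => c x y) (cTransform c h) x) : IsCConvex c h := by
  obtain ⟨x₀, hx₀⟩ := hh.2
  refine ⟨hh, cTransform c h, ⟨fun y => ?_, ?_⟩,
    funext fun x => le_antisymm (hle x) (cTransform_cTransform_le x)⟩
  · have : ((c x₀ y - (h x₀).toReal : ℝ) : EReal) ≤ cTransform c h y := by
      rw [EReal.coe_sub, EReal.coe_toReal hx₀ (hh.1 x₀)]
      exact le_iSup (fun x => (c x y : EReal) - h x) x₀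
    exact ne_bot_of_le_ne_bot (EReal.coe_ne_bot _) this
  · by_contra! htop
    refine hh.1 x₀ (le_bot_iff.1 ((hle x₀).trans (iSup_le fun y => ?_)))
    rw [htop y, EReal.sub_top]

end CTransform

section CSubdiff

variable {c : X → Y → ℝ} {h : X → EReal} {x z : X} {y : Y}

lemma add_sub_le_of_mem_cSubdiff (hy : y ∈ cSubdiff c h z) (x : X) :
    h z + ((c x y - c z y : ℝ) : EReal) ≤ h x := by
  rw [← (EReal.addLECancellable_coe (c z y)).add_le_add_iff_right, add_assoc, ← EReal.coe_add,
    sub_add_cancel]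
  exact hy x

lemma mem_cSubdiff_const_add (a : EReal) (hy : y ∈ cSubdiff c h x) :
    y ∈ cSubdiff c (fun z => a + h z) x := fun x' => by
  simpa only [add_assoc] using add_le_add_right (hy x') a

lemma mem_cSubdiff_iSup {ι : Sort*} {h : ι → X → EReal} (hy : ∀ i, y ∈ cSubdiff c (h i) x) :
    y ∈ cSubdiff c (fun z => ⨆ i, h i z) x := fun x' =>
  EReal.iSup_add_coe_le fun i => (hy i x').trans (by gcongr; exact le_iSup (fun i => h i x') i)

lemma ProperFn.exists_eq_coe_of_mem_cSubdiff (hh : ProperFn h) (hy : y ∈ cSubdiff c h x) :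
    ∃ r : ℝ, h x = r := by
  obtain ⟨x₀, hx₀⟩ := hh.2
  have hx : h x ≠ ⊤ := fun htop => by
    have := hy x₀
    rw [htop, EReal.top_add_coe, top_le_iff] at this
    exact EReal.add_ne_top hx₀ (EReal.coe_ne_top _) this
  exact ⟨(h x).toReal, (EReal.coe_toReal hx (hh.1 x)).symm⟩

lemma IsCAntiderivative.exists_eq_coe {f : X → EReal} {M : X → Set Y}
    (hf : IsCAntiderivative c f M) (hx : x ∈ mapDom M) : ∃ r : ℝ, f x = r :=
  let ⟨_, hy⟩ := hx
  hf.1.exists_eq_coe_of_mem_cSubdiff (hf.2 x _ hy)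

end CSubdiff

section Chain

variable {c : X → Y → ℝ} {M : X → Set Y} {n : ℕ} {xs : ℕ → X} {ys : ℕ → Y} {s x : X}

/-- `rockafellar c M s x` is, definitionally, the supremum of these sums over `n > 0` and chains
in `G(M)` with `xs 0 = s`. -/
def chainSum (c : X → Y → ℝ) (n : ℕ) (xs : ℕ → X) (ys : ℕ → Y) (x : X) : ℝ :=
  ∑ i ∈ Finset.range n, (c (if i + 1 < n then xs (i + 1) else x) (ys i) - c (xs i) (ys i))

@[simp]
lemma chainSum_zero : chainSum c 0 xs ys x = 0 :=
  Finset.sum_range_zero _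

lemma chainSum_succ :
    chainSum c (n + 1) xs ys x = chainSum c n xs ys (xs n) + (c x (ys n) - c (xs n) (ys n)) := by
  rw [chainSum, Finset.sum_range_succ, if_neg (lt_irrefl _)]
  congr 1
  refine Finset.sum_congr rfl fun i hi => ?_
  rw [Finset.mem_range] at hi
  rw [if_pos (by omega : i + 1 < n + 1)]
  split_ifs with h
  · rfl
  · rw [show i + 1 = n by omega]

lemma chainSum_congr {xs' : ℕ → X} {ys' : ℕ → Y} (hxs : ∀ i < n, xs i = xs' i)
    (hys : ∀ i < n, ys i = ys' i) : chainSum c n xs ys x = chainSum c n xs' ys' x := by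
  refine Finset.sum_congr rfl fun i hi => ?_
  rw [Finset.mem_range] at hi
  split_ifs with h
  · rw [hxs _ h, hxs i hi, hys i hi]
  · rw [hxs i hi, hys i hi]

lemma chainSum_update_succ (x' : X) (y : Y) :
    chainSum c (n + 1) (Function.update xs n x) (Function.update ys n y) x' =
      chainSum c n xs ys x + (c x' y - c x y) := by
  rw [chainSum_succ, Function.update_self, Function.update_self,
    chainSum_congr (fun i hi => Function.update_of_ne hi.ne _ _)
      (fun i hi => Function.update_of_ne hi.ne _ _)]

lemma chainSum_le_rockafellar (hn : 0 < n) (h0 : xs 0 = s) (hys : ∀ i < n, ys i ∈ M (xs i)) :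
    (chainSum c n xs ys x : EReal) ≤ rockafellar c M s x :=
  le_iSup_of_le n <| le_iSup_of_le hn <| le_iSup_of_le xs <| le_iSup_of_le ys <|
    le_iSup_of_le ⟨h0, hys⟩ le_rfl

lemma rockafellar_add_coe_le {a : ℝ} {b : EReal}
    (h : ∀ n, 0 < n → ∀ xs ys, xs 0 = s → (∀ i < n, ys i ∈ M (xs i)) →
      (chainSum c n xs ys x : EReal) + a ≤ b) :
    rockafellar c M s x + a ≤ b :=
  EReal.iSup_add_coe_le fun n => EReal.iSup_add_coe_le fun hn => EReal.iSup_add_coe_le fun xs =>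
    EReal.iSup_add_coe_le fun ys => EReal.iSup_add_coe_le fun hp => h n hn xs ys hp.1 hp.2

lemma coe_sub_le_rockafellar {y : Y} (hy : y ∈ M s) (x : X) :
    ((c x y - c s y : ℝ) : EReal) ≤ rockafellar c M s x := by
  have := chainSum_le_rockafellar (c := c) (x := x) one_pos (xs := fun _ => s)
    (ys := fun _ => y) rfl fun _ _ => hy
  simpa [chainSum] using this

lemma add_chainSum_le {h : X → EReal} (hsub : ∀ z y, y ∈ M z → y ∈ cSubdiff c h z) :
    ∀ n, (∀ i < n + 1, ys i ∈ M (xs i)) → ∀ x, h (xs 0) + chainSum c (n + 1) xs ys x ≤ h x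
  | 0, hys, x => by
    rw [chainSum_succ, chainSum_zero, zero_add]
    exact add_sub_le_of_mem_cSubdiff (hsub _ _ (hys 0 one_pos)) x
  | n + 1, hys, x => by
    rw [chainSum_succ, EReal.coe_add, ← add_assoc]
    calc _ ≤ h (xs (n + 1)) + ((c x (ys (n + 1)) - c (xs (n + 1)) (ys (n + 1)) : ℝ) : EReal) :=
          add_le_add_left (add_chainSum_le hsub n (fun i hi => hys i (by omega)) _) _
      _ ≤ h x := add_sub_le_of_mem_cSubdiff (hsub _ _ (hys (n + 1) (by omega))) x

lemma add_rockafellar_le {h : X → EReal} (hsub : ∀ z y, y ∈ M z → y ∈ cSubdiff c h z) {r : ℝ}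
    (hs : h s = r) (x : X) : h s + rockafellar c M s x ≤ h x := by
  rw [hs, add_comm]
  refine rockafellar_add_coe_le fun n hn xs ys h0 hys => ?_
  obtain ⟨m, rfl⟩ : ∃ m, n = m + 1 := ⟨n - 1, by omega⟩
  rw [add_comm, ← hs, ← h0]
  exact add_chainSum_le hsub m hys x

lemma mem_cSubdiff_rockafellar {y : Y} (hy : y ∈ M x) (s : X) :
    y ∈ cSubdiff c (rockafellar c M s) x := fun x' => by
  refine rockafellar_add_coe_le fun n hn xs ys h0 hys => ?_
  have hext := chainSum_le_rockafellar (c := c) (M := M) (s := s) (x := x') n.succ_pos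
    (xs := Function.update xs n x) (ys := Function.update ys n y)
    (by rw [Function.update_of_ne hn.ne]; exact h0) fun i hi => by
      rcases Nat.lt_succ_iff_lt_or_eq.1 hi with hi | rfl
      · rw [Function.update_of_ne hi.ne, Function.update_of_ne hi.ne]; exact hys i hi
      · rw [Function.update_self, Function.update_self]; exact hy
  rw [chainSum_update_succ] at hext
  calc (chainSum c n xs ys x : EReal) + (c x' y : EReal)
      = ((chainSum c n xs ys x + (c x' y - c x y) : ℝ) : EReal) + (c x y : EReal) := by
        norm_cast; ring
    _ ≤ rockafellar c M s x' + (c x y : EReal) := add_le_add_left hext _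

end Chain

section Envelope

variable {c : X → Y → ℝ} {f : X → EReal} {S : Set X} {M : X → Set Y}

def rockafellarEnvelope (c : X → Y → ℝ) (f : X → EReal) (S : Set X) (M : X → Set Y) :
    X → EReal :=
  fun x => ⨆ s : S, (f s + rockafellar c M s x)

lemma rockafellarEnvelope_le (hf : IsCAntiderivative c f M) (hSdom : S ⊆ mapDom M)
    {h : X → EReal} (hsub : ∀ z y, y ∈ M z → y ∈ cSubdiff c h z) (hagree : ∀ s ∈ S, h s = f s)
    (x : X) : rockafellarEnvelope c f S M x ≤ h x :=
  iSup_le fun s => by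
    obtain ⟨r, hr⟩ := hf.exists_eq_coe (hSdom s.2)
    rw [← hagree s s.2]
    exact add_rockafellar_le hsub ((hagree s s.2).trans hr) x

lemma rockafellarEnvelope_eq_of_mem (hf : IsCAntiderivative c f M) (hSdom : S ⊆ mapDom M)
    {s : X} (hs : s ∈ S) : rockafellarEnvelope c f S M s = f s := by
  refine le_antisymm (rockafellarEnvelope_le hf hSdom hf.2 (fun _ _ => rfl) s) ?_
  obtain ⟨y, hy⟩ := hSdom hs
  calc f s = f s + ((c s y - c s y : ℝ) : EReal) := by simp
    _ ≤ f s + rockafellar c M s s := add_le_add_right (coe_sub_le_rockafellar hy s) _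
    _ ≤ rockafellarEnvelope c f S M s := le_iSup (fun t : S => f t + rockafellar c M t s) ⟨s, hs⟩

lemma rockafellarEnvelope_ne_bot (hf : IsCAntiderivative c f M) (hSdom : S ⊆ mapDom M)
    (hS : S.Nonempty) (x : X) : rockafellarEnvelope c f S M x ≠ ⊥ := by
  obtain ⟨s, hs⟩ := hS
  obtain ⟨y, hy⟩ := hSdom hs
  obtain ⟨r, hr⟩ := hf.exists_eq_coe (hSdom hs)
  refine ne_bot_of_le_ne_bot (EReal.coe_ne_bot (r + (c x y - c s y))) ?_
  calc ((r + (c x y - c s y) : ℝ) : EReal) ≤ f s + rockafellar c M s x := by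
        rw [EReal.coe_add, hr]; exact add_le_add_right (coe_sub_le_rockafellar hy x) _
    _ ≤ rockafellarEnvelope c f S M x := le_iSup (fun t : S => f t + rockafellar c M t x) ⟨s, hs⟩

lemma mem_cSubdiff_rockafellarEnvelope {x : X} {y : Y} (hy : y ∈ M x) :
    y ∈ cSubdiff c (rockafellarEnvelope c f S M) x :=
  mem_cSubdiff_iSup fun s => mem_cSubdiff_const_add (f s) (mem_cSubdiff_rockafellar hy s)

lemma rockafellarEnvelope_le_cTransform_cTransform (hf : IsCAntiderivative c f M)
    (hSdom : S ⊆ mapDom M) (x : X) :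
    rockafellarEnvelope c f S M x ≤
      cTransform (fun y x => c x y) (cTransform c (rockafellarEnvelope c f S M)) x :=
  iSup_le fun s => by
    obtain ⟨r, hr⟩ := hf.exists_eq_coe (hSdom s.2)
    rw [hr, add_comm]
    refine rockafellar_add_coe_le fun n hn xs ys h0 hys => ?_
    obtain ⟨m, rfl⟩ : ∃ m, n = m + 1 := ⟨n - 1, by omega⟩
    have hmin : ∀ x', ((c x' (ys m) - (c x (ys m) - (chainSum c (m + 1) xs ys x + r)) : ℝ) :
        EReal) ≤ rockafellarEnvelope c f S M x' := fun x' => by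
      rw [show c x' (ys m) - (c x (ys m) - (chainSum c (m + 1) xs ys x + r)) =
          r + chainSum c (m + 1) xs ys x' by rw [chainSum_succ, chainSum_succ]; ring,
        EReal.coe_add, ← hr]
      calc f s + (chainSum c (m + 1) xs ys x' : EReal) ≤ f s + rockafellar c M s x' :=
            add_le_add_right (chainSum_le_rockafellar hn h0 hys) _
        _ ≤ rockafellarEnvelope c f S M x' :=
            le_iSup (fun t : S => f t + rockafellar c M t x') s
    simpa only [sub_sub_cancel, EReal.coe_add] using le_cTransform_cTransform hmin x

lemma rockafellarEnvelope_mem_cFamily (hf : IsCAntiderivative c f M) (hSdom : S ⊆ mapDom M)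
    (hS : S.Nonempty) : rockafellarEnvelope c f S M ∈ cFamily c f S M := by
  obtain ⟨x₀, hx₀⟩ := hf.1.2
  have hproper : ProperFn (rockafellarEnvelope c f S M) :=
    ⟨rockafellarEnvelope_ne_bot hf hSdom hS, x₀,
      ne_top_of_le_ne_top hx₀ (rockafellarEnvelope_le hf hSdom hf.2 (fun _ _ => rfl) x₀)⟩
  exact ⟨isCConvex_of_le_cTransform_cTransform hproper
      (rockafellarEnvelope_le_cTransform_cTransform hf hSdom),
    fun _ _ hy => mem_cSubdiff_rockafellarEnvelope hy,
    fun _ hs => rockafellarEnvelope_eq_of_mem hf hSdom hs⟩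

end Envelope

theorem statement11_general (c : X → Y → ℝ) (f : X → EReal)
    (M : X → Set Y) (hf : IsCAntiderivative c f M)
    (S : Set X) (hS : S.Nonempty) (hSdom : S ⊆ mapDom M) :
    (∀ x, lowerEnv c f S M x = ⨆ s : S, (f s + rockafellar c M s x)) ∧
      (fun x => ⨆ s : S, (f s + rockafellar c M s x)) ∈ cFamily c f S M ∧
      ∀ h ∈ cFamily c f S M, ∀ x, (⨆ s : S, (f s + rockafellar c M s x)) ≤ h x := by
  have hmem := rockafellarEnvelope_mem_cFamily hf hSdom hS
  have hleast : ∀ h ∈ cFamily c f S M, ∀ x, rockafellarEnvelope c f S M x ≤ h x :=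
    fun h hh => rockafellarEnvelope_le hf hSdom hh.2.1 hh.2.2
  exact ⟨fun x => le_antisymm (iInf₂_le _ hmem) (le_iInf₂ fun h hh => hleast h hh x),
    hmem, hleast⟩

/-- The minimal element of `𝒜_{[c,f|_S,M]}` is
`α_{[c,f|_S,M]}(x) = sup_{s ∈ S} [f(s) + R_{[c,M,s]}(x)]`; in particular this function
belongs to the family and is below every member of it. -/
theorem statement11 [Nonempty X] [Nonempty Y] (c : X → Y → ℝ) (f : X → EReal)
    (M : X → Set Y) (hf : IsCAntiderivative c f M)
    (S : Set X) (hS : S.Nonempty) (hSdom : S ⊆ mapDom M) :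
    (∀ x, lowerEnv c f S M x = ⨆ s : S, (f s + rockafellar c M s x)) ∧
      (fun x => ⨆ s : S, (f s + rockafellar c M s x)) ∈ cFamily c f S M ∧
      ∀ h ∈ cFamily c f S M, ∀ x, (⨆ s : S, (f s + rockafellar c M s x)) ≤ h x :=
  statement11_general c f M hf S hS hSdom
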